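/- Let n ≥ 1 and E > n. There is a constant C = C(n,E) such that for all 0 < R' ≤ R, writing B_R and B_{R'} for the cubes centered at the origin in ℝⁿ of side lengths R and R' respectively, one has the pointwise convolution bound ( w_{B_R,E} * ( (R')^{−n} w_{B_{R'},E} ) )(x) = ∫_{ℝⁿ} w_{B_R,E}(x − y) (R')^{−n} w_{B_{R'},E}(y) dy ≤ C w_{B_R,E}(x) for all x ∈ ℝⁿ; C is independent of R and R'. -/

import Mathlib

open MeasureTheory Real Filter Finset
open scoped ENNReal

noncomputable section

/-- Points of `ℝ^k`, with the Euclidean norm. -/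
abbrev Pt (k : ℕ) := EuclideanSpace ℝ (Fin k)

/-- The axis-parallel cube with center `c` and side length `R`. -/
def cube {k : ℕ} (c : Fin k → ℝ) (R : ℝ) : Set (Pt k) :=
  {x | ∀ i, |x i - c i| ≤ R / 2}

/-- The weight `w_{B,E}` associated with the cube `B` with center `c` and side length `R`:
`w_{B,E}(x) = (1 + |x - c|/R)^{-E}`. -/
def wt {k : ℕ} (c : Fin k → ℝ) (R Ew : ℝ) (x : Pt k) : ℝ :=
  (1 + Real.sqrt (∑ i, (x i - c i) ^ 2) / R) ^ (-Ew)

/-- Center of the subcube indexed by `j` in the partition of the cube with center `c` and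
side length `L` into `N^k` congruent subcubes of side length `L/N`. -/
def subCtr {k : ℕ} (c : Fin k → ℝ) (L : ℝ) {N : ℕ} (j : Fin k → Fin N) : Fin k → ℝ :=
  fun i => c i - L / 2 + (L / N) * ((j i : ℝ) + 1 / 2)

/-- The center of the unit cube `[0,1]^k`. -/
def unitCtr (k : ℕ) : Fin k → ℝ := fun _ => 1 / 2

/-- The extension operator `E_Q g` associated with the truncated paraboloid;
here the frequency variable lives in `ℝ^d` and the spatial variable in `ℝ^{d+1}`
(so `n = d + 1` in the notation of the paper). -/
def extOp {d : ℕ} (Q : Set (Pt d)) (g : Pt d → ℂ) (x : Pt (d + 1)) : ℂ :=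
  ∫ ξ in Q, g ξ * Complex.exp (2 * Real.pi * Complex.I *
    ((∑ i : Fin d, (ξ i : ℂ) * (x i.castSucc : ℂ)) +
     (∑ i : Fin d, (ξ i : ℂ) ^ 2) * (x (Fin.last d) : ℂ)))

/-- The weighted norm `‖f‖_{L^p(v)} = (∫ |f|^p v)^{1/p}`. -/
def wLp {k : ℕ} (p : ℝ) (v : Pt k → ℝ) (f : Pt k → ℂ) : ℝ :=
  (∫ x, ‖f x‖ ^ p * v x) ^ (1 / p)

/-- The normalized weighted norm `‖f‖_{L^p_♯(v)} = (|B|⁻¹ ∫ |f|^p v)^{1/p}`,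
where `vol` is the volume `|B|` of the relevant cube. -/
def wLpS {k : ℕ} (p vol : ℝ) (v : Pt k → ℝ) (f : Pt k → ℂ) : ℝ :=
  (vol⁻¹ * ∫ x, ‖f x‖ ^ p * v x) ^ (1 / p)

/-- The decoupling constant `𝒟_n(δ, p, E)` with `n = d + 1` and `δ = 4^{-k}`:
the smallest nonnegative constant `D` such that
`‖E_{[0,1]^{n-1}} g‖_{L^p(w_{B,E})} ≤ D (∑_{Q ∈ Part_{δ^{1/2}}} ‖E_Q g‖²_{L^p(w_{B,E})})^{1/2}`
for every cube `B` of side `δ⁻¹` and every integrable `g`. -/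
def decC (d : ℕ) (p Ew : ℝ) (k : ℕ) : ℝ :=
  sInf {D : ℝ | 0 ≤ D ∧
    ∀ (cB : Fin (d + 1) → ℝ) (g : Pt d → ℂ),
      IntegrableOn g (cube (unitCtr d) 1) →
      wLp p (wt cB ((4 : ℝ) ^ k) Ew) (extOp (cube (unitCtr d) 1) g) ≤
        D * (∑ j : Fin d → Fin (2 ^ k),
          wLp p (wt cB ((4 : ℝ) ^ k) Ew)
            (extOp (cube (subCtr (unitCtr d) 1 j) (((2 : ℝ) ^ k)⁻¹)) g) ^ 2) ^ ((1 : ℝ) / 2)}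

/-- The upward unit normal of the paraboloid `{(ξ, |ξ|²)}` at the point above `ξ`. -/
def unitNormal {d : ℕ} (ξ : Pt d) : Fin (d + 1) → ℝ := fun i =>
  (Real.sqrt (1 + 4 * ∑ j, ξ j ^ 2))⁻¹ *
    (if h : (i : ℕ) < d then -2 * ξ ⟨(i : ℕ), h⟩ else 1)

/-- `ν`-transversality of the cubes with centers `Qc i` and side lengths `s i`:
the volume of the parallelepiped spanned by unit normals at points of the paraboloid lying
above the cubes is at least `ν`. -/
def transverse {d : ℕ} (ν : ℝ) (Qc : Fin (d + 1) → Fin d → ℝ) (s : Fin (d + 1) → ℝ) : Prop :=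
  ∀ P : Fin (d + 1) → Pt d, (∀ i, P i ∈ cube (Qc i) (s i)) →
    ν ≤ |Matrix.det (Matrix.of fun i j => unitNormal (P i) j)|

/-- The multilinear decoupling constant `𝒟_n(δ, p, ν, m, E)`, with `n = d + 1`, `δ = 4^{-k}`,
and transverse cubes of common side length `μ = 2^{-a} ≥ δ^{2^{-m}}`. -/
def decCM (d : ℕ) (p Ew ν : ℝ) (m k : ℕ) : ℝ :=
  sInf {D : ℝ | 0 ≤ D ∧
    ∀ a : ℕ, a ≤ k → a * 2 ^ m ≤ 2 * k →
    ∀ Qc : Fin (d + 1) → Fin d → ℝ,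
      (∀ i, cube (Qc i) (((2 : ℝ) ^ a)⁻¹) ⊆ cube (unitCtr d) 1) →
      transverse ν Qc (fun _ => ((2 : ℝ) ^ a)⁻¹) →
    ∀ (cB : Fin (d + 1) → ℝ) (g : Pt d → ℂ),
      IntegrableOn g (cube (unitCtr d) 1) →
      (∑ J : Fin (d + 1) → Fin (2 ^ (2 * k - a)),
        (∏ i, wLp p (wt (subCtr cB ((4 : ℝ) ^ k) J) ((2 : ℝ) ^ a) (10 * Ew))
            (extOp (cube (Qc i) (((2 : ℝ) ^ a)⁻¹)) g) ^ p) ^ ((1 : ℝ) / (d + 1))) ^ (1 / p) ≤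
      D * (∏ i, ∑ j : Fin d → Fin (2 ^ (k - a)),
        wLp p (wt cB ((4 : ℝ) ^ k) Ew)
          (extOp (cube (subCtr (Qc i) (((2 : ℝ) ^ a)⁻¹) j) (((2 : ℝ) ^ k)⁻¹)) g) ^ 2)
        ^ ((1 : ℝ) / (2 * (d + 1)))}

/-- The quantity `D_t(q, B^r, g)` from the iteration scheme; `δ = 4^{-k}`, the cubes `Q_i`
have centers `Qc i` and side lengths `2^{-a i}`, and `B^r` has center `cB` and side `δ^{-r}`. -/
def Dfun (d k : ℕ) (Ew t : ℝ) (Qc : Fin (d + 1) → Fin d → ℝ) (a : Fin (d + 1) → ℕ)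
    (q : ℕ) (cB : Fin (d + 1) → ℝ) (r : ℕ) (g : Pt d → ℂ) : ℝ :=
  (∏ i, (∑ j : Fin d → Fin (2 ^ (2 * k * q - a i)),
    wLpS t ((4 : ℝ) ^ (k * r * (d + 1))) (wt cB ((4 : ℝ) ^ (k * r)) Ew)
      (extOp (cube (subCtr (Qc i) (((2 : ℝ) ^ (a i))⁻¹) j) (((4 : ℝ) ^ (k * q))⁻¹)) g) ^ 2)
      ^ ((1 : ℝ) / 2)) ^ ((1 : ℝ) / (d + 1))

/-- The quantity `A_p(q, B^r, s, g)` from the iteration scheme. -/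
def Afun (d k : ℕ) (Ew p : ℝ) (Qc : Fin (d + 1) → Fin d → ℝ) (a : Fin (d + 1) → ℕ)
    (q s r : ℕ) (cB : Fin (d + 1) → ℝ) (g : Pt d → ℂ) : ℝ :=
  (((4 : ℝ) ^ (k * (r - s) * (d + 1)))⁻¹ *
    ∑ J : Fin (d + 1) → Fin (4 ^ (k * (r - s))),
      Dfun d k Ew 2 Qc a q (subCtr cB ((4 : ℝ) ^ (k * r)) J) s g ^ p) ^ (1 / p)

/-- `κ_p`, with `n = d + 1`. -/
def kappa (d : ℕ) (p : ℝ) : ℝ :=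
  if p ≤ 2 * (d + 1) / d then 0 else (p * (d + 1) - p - 2 * (d + 1)) / ((p - 2) * d)

/-- The `δ`-neighborhood `N_δ(Q)` of the piece of the paraboloid lying above `Q`. -/
def parabRegion {d : ℕ} (Q : Set (Pt d)) (δ : ℝ) : Set (Pt (d + 1)) :=
  {y | ∃ ξ : Pt d, ξ ∈ Q ∧ (∀ i : Fin d, y i.castSucc = ξ i) ∧
    ∃ t : ℝ, 0 ≤ t ∧ t ≤ δ ∧ y (Fin.last d) = (∑ i, ξ i ^ 2) + t}

/-- A tile: the rectangular box centered at `a` with orthonormal frame `u`, having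
side length `R` in the direction `u iLong` and side lengths `√R` in the remaining
`n - 1` orthogonal directions. -/
def tile {n : ℕ} (a : Pt n) (u : Fin n → Pt n) (R : ℝ) (iLong : Fin n) : Set (Pt n) :=
  {x | (∀ i, i ≠ iLong → |(inner ℝ (x - a) (u i) : ℝ)| ≤ Real.sqrt R / 2) ∧
    |(inner ℝ (x - a) (u iLong) : ℝ)| ≤ R / 2}

end

/-!
Split `ℝⁿ` according to whether `|y| ≤ (R + |x|)/2`. Near the origin the triangle inequality gives
`w_R(x - y) ≤ 2^E w_R(x)`, and the remaining factor `(R')⁻ⁿ w_{R'}(y)` has integral `∫ w_1`.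
Far from it `w_{R'}(y) ≤ 2^E (R'/R)^E w_R(x)`, and integrating `w_R(x - y)` costs `Rⁿ ∫ w_1`;
the total factor `(R'/R)^E (R/R')ⁿ` is at most `1` because `E > n`. Adding the two case bounds
gives one pointwise bound valid for every `y`, which is then integrated.
-/

open Module

lemma wt_zero_eq {n : ℕ} (R Ew : ℝ) (x : Pt n) :
    wt (fun _ => 0) R Ew x = (1 + ‖x‖ / R) ^ (-Ew) := by
  simp [wt, EuclideanSpace.norm_eq]

lemma rpow_neg_le_mul_rpow_neg {s t c E : ℝ} (hs : 0 < s) (hc : 0 ≤ c) (hE : 0 ≤ E)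
    (h : s ≤ c * t) : t ^ (-E) ≤ c ^ E * s ^ (-E) := by
  have hct : 0 < c * t := hs.trans_le h
  have hc0 : 0 < c := hc.lt_of_ne (by rintro rfl; simp at hct)
  have ht : 0 < t := pos_of_mul_pos_right hct hc
  calc t ^ (-E) = c ^ E * (c * t) ^ (-E) := by
        rw [Real.mul_rpow hc ht.le, ← mul_assoc, ← Real.rpow_add hc0, add_neg_cancel,
          Real.rpow_zero, one_mul]
    _ ≤ c ^ E * s ^ (-E) :=
        mul_le_mul_of_nonneg_left (Real.rpow_le_rpow_of_nonpos hs h (neg_nonpos.2 hE))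
          (by positivity)

section Weights

variable {V : Type*} [NormedAddCommGroup V]

lemma one_add_norm_le_or {R R' : ℝ} (hR : 0 < R) (hR' : 0 < R') (x y : V) :
    1 + ‖x‖ / R ≤ 2 * (1 + ‖x - y‖ / R) ∨ 1 + ‖x‖ / R ≤ 2 * R' / R * (1 + ‖y‖ / R') := by
  have hxy := norm_sub_norm_le x y
  rcases le_or_gt (R + ‖x‖) (2 * (R' + ‖y‖)) with h | h
  · right
    calc 1 + ‖x‖ / R = (R + ‖x‖) / R := by field_simp
      _ ≤ 2 * (R' + ‖y‖) / R := by gcongr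
      _ = 2 * R' / R * (1 + ‖y‖ / R') := by field_simp
  · left
    calc 1 + ‖x‖ / R = (R + ‖x‖) / R := by field_simp
      _ ≤ 2 * (R + ‖x - y‖) / R := by gcongr; linarith [norm_nonneg y]
      _ = 2 * (1 + ‖x - y‖ / R) := by field_simp

lemma rpow_neg_mul_rpow_neg_le {R R' E : ℝ} (hR : 0 < R) (hR' : 0 < R') (hE : 0 ≤ E) (x y : V) :
    (1 + ‖x - y‖ / R) ^ (-E) * (1 + ‖y‖ / R') ^ (-E) ≤
      2 ^ E * (1 + ‖x‖ / R) ^ (-E) *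
        ((1 + ‖y‖ / R') ^ (-E) + (R' / R) ^ E * (1 + ‖x - y‖ / R) ^ (-E)) := by
  have hs : 0 < 1 + ‖x‖ / R := by positivity
  have hwx : 0 ≤ (1 + ‖x - y‖ / R) ^ (-E) := by positivity
  have hwy : 0 ≤ (1 + ‖y‖ / R') ^ (-E) := by positivity
  rcases one_add_norm_le_or hR hR' x y with h | h
  · have hnear := rpow_neg_le_mul_rpow_neg hs zero_le_two hE h
    calc _ ≤ 2 ^ E * (1 + ‖x‖ / R) ^ (-E) * (1 + ‖y‖ / R') ^ (-E) := by gcongr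
      _ ≤ _ := by gcongr; exact le_add_of_nonneg_right (by positivity)
  · have hfar := rpow_neg_le_mul_rpow_neg hs (by positivity) hE h
    rw [mul_div_assoc, Real.mul_rpow zero_le_two (by positivity)] at hfar
    calc _ ≤ (1 + ‖x - y‖ / R) ^ (-E) * (2 ^ E * (R' / R) ^ E * (1 + ‖x‖ / R) ^ (-E)) := by
          gcongr
      _ = 2 ^ E * (1 + ‖x‖ / R) ^ (-E) * ((R' / R) ^ E * (1 + ‖x - y‖ / R) ^ (-E)) := by ring
      _ ≤ _ := by gcongr; exact le_add_of_nonneg_left hwy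

variable [NormedSpace ℝ V]

lemma one_add_norm_div_eq_norm_inv_smul {R : ℝ} (hR : 0 ≤ R) (y : V) :
    1 + ‖y‖ / R = 1 + ‖R⁻¹ • y‖ := by
  rw [norm_smul, Real.norm_eq_abs, abs_of_nonneg (inv_nonneg.2 hR), inv_mul_eq_div]

variable [FiniteDimensional ℝ V] [MeasurableSpace V] [BorelSpace V]
  (μ : Measure V) [μ.IsAddHaarMeasure]

lemma integrable_one_add_norm_div {R E : ℝ} (hE : (finrank ℝ V : ℝ) < E) (hR : 0 < R) :
    Integrable (fun y : V => (1 + ‖y‖ / R) ^ (-E)) μ := by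
  simp_rw [one_add_norm_div_eq_norm_inv_smul hR.le]
  exact (integrable_comp_smul_iff μ (fun y : V => (1 + ‖y‖) ^ (-E)) (inv_ne_zero hR.ne')).2
    (integrable_one_add_norm hE)

lemma integral_one_add_norm_div {R : ℝ} (E : ℝ) (hR : 0 < R) :
    ∫ y, (1 + ‖y‖ / R) ^ (-E) ∂μ = R ^ finrank ℝ V * ∫ y, (1 + ‖y‖) ^ (-E) ∂μ := by
  simp_rw [one_add_norm_div_eq_norm_inv_smul hR.le]
  exact Measure.integral_comp_inv_smul_of_nonneg μ (fun y : V => (1 + ‖y‖) ^ (-E)) hR.le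

lemma integral_one_add_norm_pos {E : ℝ} (hE : (finrank ℝ V : ℝ) < E) :
    0 < ∫ y, (1 + ‖y‖) ^ (-E) ∂μ :=
  integral_pos_of_integrable_nonneg_nonzero (x := 0)
    (Continuous.rpow_const (by fun_prop) fun y => Or.inl (by positivity)) (integrable_one_add_norm hE)
    (fun y => by positivity) (by simp)

lemma div_rpow_mul_pow_le {R R' E : ℝ} {d : ℕ} (hR' : 0 < R') (hRR : R' ≤ R) (hd : (d : ℝ) ≤ E) :
    (R' / R) ^ E * R ^ d ≤ R' ^ d := by
  have hR : 0 < R := hR'.trans_le hRR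
  calc (R' / R) ^ E * R ^ d ≤ (R' / R) ^ (d : ℝ) * R ^ d :=
        mul_le_mul_of_nonneg_right
          (Real.rpow_le_rpow_of_exponent_ge (by positivity) (div_le_one_of_le₀ hRR hR.le) hd)
          (by positivity)
    _ = R' ^ d := by rw [Real.rpow_natCast, div_pow, div_mul_cancel₀ _ (by positivity)]

theorem integral_rpow_neg_mul_rpow_neg_le {R R' E : ℝ} (hE : (finrank ℝ V : ℝ) < E)
    (hR' : 0 < R') (hRR : R' ≤ R) (x : V) :
    ∫ y, (1 + ‖x - y‖ / R) ^ (-E) * (1 + ‖y‖ / R') ^ (-E) ∂μ ≤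
      2 ^ (E + 1) * (∫ y, (1 + ‖y‖) ^ (-E) ∂μ) * R' ^ finrank ℝ V * (1 + ‖x‖ / R) ^ (-E) := by
  have hR : 0 < R := hR'.trans_le hRR
  have hE0 : 0 ≤ E := (Nat.cast_nonneg _).trans hE.le
  have hintR := integrable_one_add_norm_div μ hE hR
  have hintR' := integrable_one_add_norm_div μ hE hR'
  have hI := (integral_one_add_norm_pos μ hE).le
  calc _ ≤ ∫ y, 2 ^ E * (1 + ‖x‖ / R) ^ (-E) *
          ((1 + ‖y‖ / R') ^ (-E) + (R' / R) ^ E * (1 + ‖x - y‖ / R) ^ (-E)) ∂μ :=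
        integral_mono_of_nonneg (ae_of_all _ fun y => by positivity)
          ((hintR'.add ((hintR.comp_sub_left x).const_mul _)).const_mul _)
          (ae_of_all _ (rpow_neg_mul_rpow_neg_le hR hR' hE0 x))
    _ = 2 ^ E * (1 + ‖x‖ / R) ^ (-E) * (∫ y, (1 + ‖y‖) ^ (-E) ∂μ) *
          (R' ^ finrank ℝ V + (R' / R) ^ E * R ^ finrank ℝ V) := by
        rw [integral_const_mul, integral_add hintR' ((hintR.comp_sub_left x).const_mul _),
          integral_const_mul, integral_sub_left_eq_self (fun y => (1 + ‖y‖ / R) ^ (-E)) μ x,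
          integral_one_add_norm_div μ E hR, integral_one_add_norm_div μ E hR']
        ring
    _ ≤ 2 ^ E * (1 + ‖x‖ / R) ^ (-E) * (∫ y, (1 + ‖y‖) ^ (-E) ∂μ) *
          (R' ^ finrank ℝ V + R' ^ finrank ℝ V) := by
        gcongr
        exact div_rpow_mul_pow_le hR' hRR hE.le
    _ = _ := by rw [Real.rpow_add_one two_ne_zero]; ring

end Weights

theorem statement18_general (n : ℕ) (Ew : ℝ) (hE : (n : ℝ) < Ew) :
    ∃ C : ℝ, 0 < C ∧ ∀ R R' : ℝ, 0 < R' → R' ≤ R → ∀ x : Pt n,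
      (∫ y : Pt n, wt (fun _ => 0) R Ew (x - y) * ((R' ^ n)⁻¹ * wt (fun _ => 0) R' Ew y)) ≤
        C * wt (fun _ => 0) R Ew x := by
  have hE' : (finrank ℝ (Pt n) : ℝ) < Ew := by rwa [finrank_euclideanSpace_fin]
  refine ⟨2 ^ (Ew + 1) * ∫ y : Pt n, (1 + ‖y‖) ^ (-Ew),
    mul_pos (by positivity) (integral_one_add_norm_pos volume hE'), ?_⟩
  intro R R' hR' hRR x
  have hbound := integral_rpow_neg_mul_rpow_neg_le volume hE' hR' hRR x
  rw [finrank_euclideanSpace_fin] at hbound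
  simp only [wt_zero_eq, mul_left_comm _ (R' ^ n)⁻¹, integral_const_mul]
  calc _ ≤ (R' ^ n)⁻¹ * (2 ^ (Ew + 1) * (∫ y : Pt n, (1 + ‖y‖) ^ (-Ew)) * R' ^ n *
        (1 + ‖x‖ / R) ^ (-Ew)) := by gcongr
    _ = _ := by field_simp

/-- the convolution inequality
`w_{B_R,E} * ((R')^{-n} w_{B_{R'},E}) ≲ w_{B_R,E}` for `0 < R' ≤ R`, cubes centered at
the origin. -/
theorem statement18 (n : ℕ) (hn : 1 ≤ n) (Ew : ℝ) (hE : (n : ℝ) < Ew) :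
    ∃ C : ℝ, 0 < C ∧ ∀ R R' : ℝ, 0 < R' → R' ≤ R → ∀ x : Pt n,
      (∫ y : Pt n, wt (fun _ => 0) R Ew (x - y) * ((R' ^ n)⁻¹ * wt (fun _ => 0) R' Ew y)) ≤
        C * wt (fun _ => 0) R Ew x :=
  statement18_general n Ew hE
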